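/- Let k ∈ ℝ, l > 0, Ω ⊂ ℝ^N bounded smooth. If u ∈ V = {u ∈ H^2(Ω): u|_Γ ∈ H^2(Γ)} solves −Δu + λu = h in L^2(Ω) and −ku_ν − lΔ_Γu + λu = h in L^2(Γ) with h ∈ H^1(Ω), h|_Γ ∈ H^1(Γ), then u ∈ H^3(Ω) and u|_Γ ∈ H^3(Γ). -/

import Mathlib

/-!
Bootstrap. The boundary equation expresses `Δ_Γ (u|_Γ)` through `u_ν`, `u|_Γ` and `h|_Γ`, so
inverting `−Δ_Γ + 1` gains two derivatives on `u|_Γ` over the worst of these three. From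
`u ∈ H²(Ω)` the trace theorem gives `u_ν ∈ H^{1/2}(Γ)`, hence `u|_Γ ∈ H^{5/2}(Γ)`; since
`Δu = λu − h ∈ H¹(Ω)`, elliptic regularity gives `u ∈ H³(Ω)`. Then `u_ν ∈ H^{3/2}(Γ)`, and a
second pass through the boundary equation gives `u|_Γ ∈ H³(Γ)`.
-/

section

variable {𝕜 E : Type*} [Field 𝕜] [AddCommGroup E] [Module 𝕜 E] {H : ℝ → Submodule 𝕜 E}

theorem laplacian_mem_of_neg_add_smul_eq {Δ : E →ₗ[𝕜] E} {lam : 𝕜} {u h : E}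
    (heq : -Δ u + lam • u = h) {s : ℝ} (hu : u ∈ H s) (hh : h ∈ H s) : Δ u ∈ H s := by
  have hΔ : Δ u = lam • u - h := by linear_combination (norm := module) -heq
  rw [hΔ]
  exact sub_mem (Submodule.smul_mem _ _ hu) hh

theorem mem_add_two_of_boundary_eq {ΔΓ : E →ₗ[𝕜] E}
    (hiso : ∀ (s : ℝ) (v : E), -ΔΓ v + v ∈ H s → v ∈ H (s + 2))
    {k l lam : 𝕜} (hl : l ≠ 0) {w v g : E} (heq : -k • w - l • ΔΓ v + lam • v = g)
    {s : ℝ} (hw : w ∈ H s) (hv : v ∈ H s) (hg : g ∈ H s) : v ∈ H (s + 2) := by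
  have hΔΓ : ΔΓ v = l⁻¹ • (-k • w + lam • v - g) := by
    rw [← heq, eq_inv_smul_iff₀ hl]
    module
  have hΔΓ_mem : ΔΓ v ∈ H s := by
    rw [hΔΓ]
    exact Submodule.smul_mem _ _
      (sub_mem (add_mem (Submodule.smul_mem _ _ hw) (Submodule.smul_mem _ _ hv)) hg)
  exact hiso s v (add_mem (neg_mem hΔΓ_mem) hv)

end

/-- elliptic regularity for the resolvent problem: if `u ∈ V` solves
`−Δu + λu = h` in `L²(Ω)` and `−ku_ν − lΔ_Γu + λu = h` in `L²(Γ)` with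
`h ∈ H¹(Ω)`, `h|_Γ ∈ H¹(Γ)`, then `u ∈ H³(Ω)` and `u|_Γ ∈ H³(Γ)`.
`FΩ`/`FΓ` are ambient spaces of distributions on `Ω`/`Γ`, with the Sobolev
filtrations `HΩ s = H^s(Ω)`, `HΓ s = H^s(Γ)`; `tr` is the trace, `dν` the normal
derivative, `Δ` the Laplacian, `ΔΓ` the Laplace–Beltrami operator.  The hypotheses
record the standard tools: trace theorem, the isomorphism `−Δ_Γ + 1`, elliptic
regularity for the Dirichlet problem, and monotonicity of the Sobolev scale. -/
theorem stmt12 {FΩ FΓ : Type*} [AddCommGroup FΩ] [Module ℂ FΩ]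
    [AddCommGroup FΓ] [Module ℂ FΓ]
    (HΩ : ℝ → Submodule ℂ FΩ) (HΓ : ℝ → Submodule ℂ FΓ)
    (hmonoΩ : ∀ s t : ℝ, s ≤ t → HΩ t ≤ HΩ s)
    (hmonoΓ : ∀ s t : ℝ, s ≤ t → HΓ t ≤ HΓ s)
    (tr : FΩ →ₗ[ℂ] FΓ) (dν : FΩ →ₗ[ℂ] FΓ) (Δ : FΩ →ₗ[ℂ] FΩ) (ΔΓ : FΓ →ₗ[ℂ] FΓ)
    -- trace theorem: `u ∈ H^s(Ω) ⇒ u_ν ∈ H^{s-3/2}(Γ)`: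
    (htrace : ∀ (s : ℝ) (u : FΩ), u ∈ HΩ s → dν u ∈ HΓ (s - 3/2))
    -- isomorphism `−Δ_Γ + 1 : H^{s+2}(Γ) → H^s(Γ)`:
    (hiso : ∀ (s : ℝ) (v : FΓ), (-ΔΓ v + v) ∈ HΓ s → v ∈ HΓ (s + 2))
    -- elliptic regularity for the nonhomogeneous Dirichlet problem:
    (hell : ∀ (s : ℝ) (u : FΩ), Δ u ∈ HΩ s → tr u ∈ HΓ (s + 3/2) → u ∈ HΩ (s + 2))
    (k l : ℝ) (hl : 0 < l) (lam : ℂ)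
    (u h : FΩ)
    (hu : u ∈ HΩ 2) (huΓ : tr u ∈ HΓ 2)
    (hh : h ∈ HΩ 1) (hhΓ : tr h ∈ HΓ 1)
    -- the domain equation `−Δu + λu = h`:
    (heqΩ : -Δ u + lam • u = h)
    -- the boundary equation `−ku_ν − lΔ_Γu + λu = h` on `Γ`:
    (heqΓ : -(k : ℂ) • dν u - (l : ℂ) • ΔΓ (tr u) + lam • tr u = tr h) :
    u ∈ HΩ 3 ∧ tr u ∈ HΓ 3 := by
  have hl' : (l : ℂ) ≠ 0 := by exact_mod_cast hl.ne'
  have htru : tr u ∈ HΓ (1 / 2 + 2) :=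
    mem_add_two_of_boundary_eq hiso hl' heqΓ
      (hmonoΓ _ _ (by norm_num) (htrace 2 u hu)) (hmonoΓ _ _ (by norm_num) huΓ)
      (hmonoΓ _ _ (by norm_num) hhΓ)
  have hΔu : Δ u ∈ HΩ 1 :=
    laplacian_mem_of_neg_add_smul_eq heqΩ (hmonoΩ _ _ (by norm_num) hu) hh
  have hu3 : u ∈ HΩ (1 + 2) := hell 1 u hΔu (by convert htru using 2; norm_num)
  have htru3 : tr u ∈ HΓ (1 + 2) :=
    mem_add_two_of_boundary_eq hiso hl' heqΓ
      (hmonoΓ _ _ (by norm_num) (htrace _ u hu3)) (hmonoΓ _ _ (by norm_num) huΓ) hhΓ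
  norm_num at hu3 htru3
  exact ⟨hu3, htru3⟩
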